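/- Simulation (model-error) bound for discounted visitation distributions (Section B.2 of the supplement): for every policy π and every (a,s) ∈ A × S, D_TV(d^π(·|a,s), d^{π,p̂}(·|a,s)) ≤ (γ/(1−γ)) Σ_{a'∈A, s'∈S} q^π(a',s';a,s) D_TV(p(·|a',s'), p̂(·|a',s')). -/

import Mathlib

namespace VEPO

variable {S A : Type} [Fintype S] [Fintype A] [DecidableEq S] [DecidableEq A]

/-- A probability mass function on a finite type, represented as a real-valued function. -/
def IsPMF {X : Type} [Fintype X] (f : X → ℝ) : Prop :=
  (∀ x, 0 ≤ f x) ∧ ∑ x : X, f x = 1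

/-- A transition kernel: for each action-state pair `(a, s)`, a pmf `p a s` on next states. -/
def IsKernel (p : A → S → S → ℝ) : Prop := ∀ a s, IsPMF (p a s)

/-- A policy: for each state `s`, a pmf `π s` on actions. -/
def IsPolicy (π : S → A → ℝ) : Prop := ∀ s, IsPMF (π s)

/-- The `t`-step visitation probability `p_t^π(s' | a, s)`. -/
def visit (p : A → S → S → ℝ) (π : S → A → ℝ) : ℕ → A → S → S → ℝ
  | 0, _, s, s' => if s' = s then 1 else 0
  | 1, a, s, s' => p a s s'
  | (t + 2), a, s, s' =>
      ∑ s'' : S, visit p π (t + 1) a s s'' * ∑ a'' : A, π s'' a'' * p a'' s'' s'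

/-- The Q-function `Q^π(a, s)`. -/
noncomputable def Qfun (p : A → S → S → ℝ) (r : S → A → ℝ) (γ : ℝ)
    (π : S → A → ℝ) (a : A) (s : S) : ℝ :=
  r s a + ∑' t : ℕ, γ ^ (t + 1) *
    ∑ s' : S, visit p π (t + 1) a s s' * ∑ a' : A, π s' a' * r s' a'

/-- The value function `V^π(s)`. -/
noncomputable def Vfun (p : A → S → S → ℝ) (r : S → A → ℝ) (γ : ℝ)
    (π : S → A → ℝ) (s : S) : ℝ :=
  ∑ a : A, π s a * Qfun p r γ π a s

/-- The advantage function `A^π(a, s)`. -/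
noncomputable def Adv (p : A → S → S → ℝ) (r : S → A → ℝ) (γ : ℝ)
    (π : S → A → ℝ) (a : A) (s : S) : ℝ :=
  Qfun p r γ π a s - Vfun p r γ π s

/-- The conditional discounted visitation probability `d^π(s' | a, s)`. -/
noncomputable def dvisit (p : A → S → S → ℝ) (γ : ℝ) (π : S → A → ℝ)
    (s' : S) (a : A) (s : S) : ℝ :=
  (1 - γ) * ∑' t : ℕ, γ ^ t * visit p π t a s s'

/-- The integrated discounted visitation probability `d^{π,ν}(s')`. -/
noncomputable def dnu (p : A → S → S → ℝ) (γ : ℝ) (ν : S → ℝ)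
    (π : S → A → ℝ) (s' : S) : ℝ :=
  ∑ s : S, ∑ a : A, π s a * ν s * dvisit p γ π s' a s

/-- The integrated value `V(π) = Σ_s ν(s) V^π(s)`. -/
noncomputable def IntV (p : A → S → S → ℝ) (r : S → A → ℝ) (γ : ℝ) (ν : S → ℝ)
    (π : S → A → ℝ) : ℝ :=
  ∑ s : S, ν s * Vfun p r γ π s

/-- The first-order term `η₁(π₁, π₂)`. -/
noncomputable def eta1 (p : A → S → S → ℝ) (r : S → A → ℝ) (γ : ℝ) (ν : S → ℝ)
    (π₁ π₂ : S → A → ℝ) : ℝ :=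
  ∑ a : A, ∑ s : S, π₁ s a * Adv p r γ π₂ a s * dnu p γ ν π₂ s

/-- The higher-order remainder `η₂(π₁, π₂)`. -/
noncomputable def eta2 (p : A → S → S → ℝ) (r : S → A → ℝ) (γ : ℝ) (ν : S → ℝ)
    (π₁ π₂ : S → A → ℝ) : ℝ :=
  ∑ a : A, ∑ s : S, (π₁ s a - π₂ s a) * Adv p r γ π₂ a s *
    (dnu p γ ν π₁ s - dnu p γ ν π₂ s)

/-- Total variation distance between two pmfs on a finite type. -/
noncomputable def DTV {X : Type} [Fintype X] (μ₁ μ₂ : X → ℝ) : ℝ :=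
  (1 / 2) * ∑ x : X, |μ₁ x - μ₂ x|

/-- Kullback–Leibler divergence between two pmfs on a finite type, valued in `EReal`
(equal to `⊤` if `μ₁` is not absolutely continuous w.r.t. `μ₂`). -/
noncomputable def DKL {X : Type} [Fintype X] (μ₁ μ₂ : X → ℝ) : EReal :=
  ∑ x : X, (if μ₁ x = 0 then (0 : EReal)
    else if μ₂ x = 0 then (⊤ : EReal)
    else ((μ₁ x * Real.log (μ₁ x / μ₂ x) : ℝ) : EReal))

/-- Conditional discounted stationary probability ratio `ω^π(a', s'; a, s)`. -/
noncomputable def ratio (p : A → S → S → ℝ) (γ : ℝ) (pinf : A → S → ℝ)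
    (π : S → A → ℝ) (a' : A) (s' : S) (a : A) (s : S) : ℝ :=
  (1 - γ) * ((if a' = a ∧ s' = s then 1 else 0) +
    ∑' t : ℕ, γ ^ (t + 1) * (π s' a' * visit p π (t + 1) a s s')) / pinf a' s'

/-- Integrated discounted stationary probability ratio `ω^{π,ν}(a', s')`. -/
noncomputable def rationu (p : A → S → S → ℝ) (γ : ℝ) (pinf : A → S → ℝ) (ν : S → ℝ)
    (π : S → A → ℝ) (a' : A) (s' : S) : ℝ :=
  ∑ a : A, ∑ s : S, π s a * ν s * ratio p γ pinf π a' s' a s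

/-- Marginal state distribution `p̄_t^{π,ν}` at time `t` when `S₀ ~ ν` and actions follow `π`. -/
def marg (p : A → S → S → ℝ) (π : S → A → ℝ) (ν : S → ℝ) : ℕ → S → ℝ
  | 0, s' => ν s'
  | (t + 1), s' => ∑ s : S, marg p π ν t s * ∑ a : A, π s a * p a s s'

/-- Conditional discounted state–action visitation `q^π(a', s'; a, s)`. -/
noncomputable def qvisit (p : A → S → S → ℝ) (γ : ℝ) (π : S → A → ℝ)
    (a' : A) (s' : S) (a : A) (s : S) : ℝ :=
  (1 - γ) * ((if a' = a ∧ s' = s then 1 else 0) +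
    ∑' t : ℕ, γ ^ (t + 1) * (π s' a' * visit p π (t + 1) a s s'))

/-- The estimating function `ψ(o) = ψ₁ + ψ₂(o) + ψ₃(o)` evaluated at a data tuple
`o = (s, a, rr, s')`, for nuisance functions `Ṽ = Vt`, `Ã = At`, `ω̃ = ωt`
(with `ωt a' s' a s = ω̃(a',s'; a,s)`) and `d̃ = dt` (with `dt s* a s = d̃(s* | a, s)`). -/
noncomputable def psi (γ : ℝ) (ν : S → ℝ) (π πold : S → A → ℝ)
    (Vt : S → ℝ) (At : A → S → ℝ) (ωt : A → S → A → S → ℝ) (dt : S → A → S → ℝ)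
    (s : S) (a : A) (rr : ℝ) (s' : S) : ℝ :=
  let dtnu : S → ℝ := fun sstar => ∑ a0 : A, ∑ s0 : S, πold s0 a0 * ν s0 * dt sstar a0 s0
  let ωtnu : A → S → ℝ := fun a1 s1 => ∑ a0 : A, ∑ s0 : S, πold s0 a0 * ν s0 * ωt a1 s1 a0 s0
  (∑ sstar : S, dtnu sstar * ∑ astar : A, π sstar astar * At astar sstar)
  + (1 / (1 - γ)) * ∑ sstar : S, dtnu sstar * ∑ astar : A,
      (π sstar astar - πold sstar astar) * ωt a s astar sstar *
        (rr + γ * Vt s' - Vt s - At a s)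
  + (ωtnu a s / (1 - γ)) * ∑ astar : A,
      (γ * ∑ a' : A, πold s' a' * ∑ sstar : S, dt sstar a' s' * π sstar astar * At astar sstar
       - ∑ sstar : S, dt sstar a s * π sstar astar * At astar sstar
       + (1 - γ) * π s astar * At astar s)

/-- The expectation `E[ψ(O)]` of the estimating function, where `(A₀, S₀) ~ p_∞`,
`S₁ | (A₀, S₀) ~ p(· | A₀, S₀)` and `E[R₀ | A₀, S₀] = r(S₀, A₀)`;  since `ψ` is affine
in its reward argument with a coefficient not depending on `s'`, this finite sum is
exactly the expectation of `ψ(O)`. -/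
noncomputable def Epsi (p : A → S → S → ℝ) (r : S → A → ℝ) (γ : ℝ) (ν : S → ℝ)
    (pinf : A → S → ℝ) (π πold : S → A → ℝ)
    (Vt : S → ℝ) (At : A → S → ℝ) (ωt : A → S → A → S → ℝ) (dt : S → A → S → ℝ) : ℝ :=
  ∑ a : A, ∑ s : S, pinf a s * ∑ s' : S, p a s s' *
    psi γ ν π πold Vt At ωt dt s a (r s a) s'

end VEPO

/-!
Let `D t` be the total variation distance between the `t`-step state distributions under `p`
and `p̂`. Writing one step as a mixture of the kernels over the current state–action pair gives
`D (t + 1) ≤ D t + F t`, where `F t` is the expected one-step model error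
`DTV (p(·|A_t,S_t)) (p̂(·|A_t,S_t))` under `p`. Discounting this recursion with `D 0 = 0` gives
`(1 - γ) ∑ γ^t D t ≤ γ ∑ γ^t F t`; the left side dominates the distance between the discounted
visitations (total variation is convex), and the right side is `γ/(1-γ) ∑ q^π · DTV`.
-/

namespace VEPO

section TotalVariation

variable {X Y : Type} [Fintype X] [Fintype Y]

lemma isPMF_ite_eq [DecidableEq X] (x₀ : X) : IsPMF fun x => if x = x₀ then (1 : ℝ) else 0 :=
  ⟨fun x => by positivity, by simp⟩

lemma IsPMF.sum_mul {w : X → ℝ} {M : X → Y → ℝ} (hw : IsPMF w) (hM : ∀ x, IsPMF (M x)) :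
    IsPMF fun y => ∑ x, w x * M x y :=
  ⟨fun y => Finset.sum_nonneg fun x _ => mul_nonneg (hw.1 x) ((hM x).1 y), by
    rw [Finset.sum_comm]
    simp only [← Finset.mul_sum, (hM _).2, mul_one, hw.2]⟩

lemma IsPMF.le_one {μ : X → ℝ} (hμ : IsPMF μ) (x : X) : μ x ≤ 1 :=
  hμ.2 ▸ Finset.single_le_sum (fun y _ => hμ.1 y) (Finset.mem_univ x)

lemma DTV_nonneg (μ ν : X → ℝ) : 0 ≤ DTV μ ν := by
  unfold DTV; positivity

lemma DTV_le_one {μ ν : X → ℝ} (hμ : IsPMF μ) (hν : IsPMF ν) : DTV μ ν ≤ 1 := by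
  have h : ∑ x, |μ x - ν x| ≤ ∑ x, (μ x + ν x) :=
    Finset.sum_le_sum fun x _ => abs_sub_le_iff.2 ⟨by linarith [hν.1 x], by linarith [hμ.1 x]⟩
  rw [Finset.sum_add_distrib, hμ.2, hν.2] at h
  unfold DTV; linarith

lemma DTV_const_mul {c : ℝ} (hc : 0 ≤ c) (μ ν : X → ℝ) :
    DTV (fun x => c * μ x) (fun x => c * ν x) = c * DTV μ ν := by
  simp only [DTV, ← mul_sub, abs_mul, abs_of_nonneg hc, ← Finset.mul_sum]
  ring

lemma DTV_tsum_le {f g : ℕ → X → ℝ} (hf : ∀ x, Summable fun t => f t x)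
    (hg : ∀ x, Summable fun t => g t x) :
    DTV (fun x => ∑' t, f t x) (fun x => ∑' t, g t x) ≤ ∑' t, DTV (f t) (g t) := by
  have habs : ∀ x, Summable fun t => |f t x - g t x| := fun x => ((hf x).sub (hg x)).abs
  have hx : ∀ x, |∑' t, f t x - ∑' t, g t x| ≤ ∑' t, |f t x - g t x| := fun x => by
    rw [← (hf x).tsum_sub (hg x)]
    simpa only [Real.norm_eq_abs] using norm_tsum_le_tsum_norm (f := fun t => f t x - g t x)
      (by simpa only [Real.norm_eq_abs] using habs x)
  calc DTV (fun x => ∑' t, f t x) (fun x => ∑' t, g t x)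
      ≤ 1 / 2 * ∑ x, ∑' t, |f t x - g t x| := by
        unfold DTV; gcongr with x; exact hx x
    _ = ∑' t, DTV (f t) (g t) := by
        simp only [DTV, tsum_mul_left, Summable.tsum_finsetSum fun x _ => habs x]

lemma DTV_comp_le {μ ν : X → ℝ} {M N : X → Y → ℝ} (hμ : ∀ x, 0 ≤ μ x)
    (hN : ∀ x, IsPMF (N x)) :
    DTV (fun y => ∑ x, μ x * M x y) (fun y => ∑ x, ν x * N x y) ≤
      DTV μ ν + ∑ x, μ x * DTV (M x) (N x) := by
  have hy : ∀ y, |∑ x, μ x * M x y - ∑ x, ν x * N x y| ≤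
      ∑ x, (μ x * |M x y - N x y| + |μ x - ν x| * N x y) := fun y => by
    rw [← Finset.sum_sub_distrib]
    refine (Finset.abs_sum_le_sum_abs _ _).trans (Finset.sum_le_sum fun x _ => ?_)
    calc |μ x * M x y - ν x * N x y| = |μ x * (M x y - N x y) + (μ x - ν x) * N x y| := by
          ring_nf
      _ ≤ μ x * |M x y - N x y| + |μ x - ν x| * N x y := by
          refine (abs_add_le _ _).trans_eq ?_
          rw [abs_mul, abs_mul, abs_of_nonneg (hμ x), abs_of_nonneg ((hN x).1 y)]
  calc DTV (fun y => ∑ x, μ x * M x y) (fun y => ∑ x, ν x * N x y)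
      ≤ 1 / 2 * ∑ y, ∑ x, (μ x * |M x y - N x y| + |μ x - ν x| * N x y) := by
        unfold DTV; gcongr with y; exact hy y
    _ = DTV μ ν + ∑ x, μ x * DTV (M x) (N x) := by
        simp only [DTV, Finset.sum_comm (γ := Y), Finset.sum_add_distrib, ← Finset.mul_sum,
          ← Finset.sum_mul, (hN _).2]
        simp_rw [mul_left_comm (μ _) (1 / 2 : ℝ)]
        rw [← Finset.mul_sum]
        ring

end TotalVariation

lemma one_sub_mul_tsum_le {γ : ℝ} (hγ : 0 ≤ γ) {E F : ℕ → ℝ}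
    (hE : Summable fun t => γ ^ t * E t) (hF : Summable fun t => γ ^ t * F t)
    (hEF : ∀ t, E (t + 1) ≤ E t + F t) :
    (1 - γ) * ∑' t, γ ^ t * E t ≤ E 0 + γ * ∑' t, γ ^ t * F t := by
  have hshift : ∑' t, γ ^ (t + 1) * E (t + 1) ≤ γ * (∑' t, γ ^ t * E t + ∑' t, γ ^ t * F t) := by
    rw [← hE.tsum_add hF, ← tsum_mul_left]
    refine ((summable_nat_add_iff 1).2 hE).tsum_le_tsum (fun t => ?_)
      ((hE.add hF).mul_left γ)
    rw [pow_succ', mul_assoc, ← mul_add]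
    gcongr
    exact hEF t
  have := hE.tsum_eq_zero_add
  simp only [pow_zero, one_mul] at this
  linarith

lemma summable_pow_mul_of_nonneg_of_le_one {γ : ℝ} (hγ0 : 0 ≤ γ) (hγ1 : γ < 1) {f : ℕ → ℝ}
    (hf0 : ∀ t, 0 ≤ f t) (hf1 : ∀ t, f t ≤ 1) : Summable fun t => γ ^ t * f t :=
  (summable_geometric_of_lt_one hγ0 hγ1).of_nonneg_of_le
    (fun t => mul_nonneg (pow_nonneg hγ0 t) (hf0 t))
    (fun t => mul_le_of_le_one_right (pow_nonneg hγ0 t) (hf1 t))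

section Visitation

variable {S A : Type} [Fintype S] [Fintype A] {p phat : A → S → S → ℝ} {π : S → A → ℝ} {γ : ℝ}

lemma IsPolicy.isPMF_mul {v : S → ℝ} (hπ : IsPolicy π) (hv : IsPMF v) :
    IsPMF fun x : A × S => π x.2 x.1 * v x.2 :=
  ⟨fun x => mul_nonneg ((hπ x.2).1 x.1) (hv.1 x.2), by
    simp only [Fintype.sum_prod_type_right, ← Finset.sum_mul, (hπ _).2, one_mul, hv.2]⟩

variable [DecidableEq S] [DecidableEq A]

/-- `P(A_t = a', S_t = s' | A_0 = a, S_0 = s)`; its discounted sum is `q^π` (`qvisit_eq_tsum`). -/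
def stateActionVisit (p : A → S → S → ℝ) (π : S → A → ℝ) : ℕ → A → S → A × S → ℝ
  | 0, a, s, x => if x = (a, s) then 1 else 0
  | t + 1, a, s, x => π x.2 x.1 * visit p π (t + 1) a s x.2

lemma visit_succ (t : ℕ) (a : A) (s : S) :
    visit p π (t + 1) a s = fun y => ∑ x, stateActionVisit p π t a s x * p x.1 x.2 y := by
  funext y
  cases t with
  | zero => simp [visit, stateActionVisit]
  | succ t =>
    simp only [visit, stateActionVisit, Fintype.sum_prod_type_right, Finset.mul_sum]
    exact Finset.sum_congr rfl fun _ _ => Finset.sum_congr rfl fun _ _ => by ring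

lemma isPMF_stateActionVisit_of_isPMF_visit (hπ : IsPolicy π) {t : ℕ} {a : A} {s : S}
    (h : IsPMF (visit p π t a s)) : IsPMF (stateActionVisit p π t a s) := by
  cases t with
  | zero => exact isPMF_ite_eq (a, s)
  | succ t => exact hπ.isPMF_mul h

lemma isPMF_visit (hp : IsKernel p) (hπ : IsPolicy π) (t : ℕ) (a : A) (s : S) :
    IsPMF (visit p π t a s) := by
  induction t generalizing a s with
  | zero => exact isPMF_ite_eq s
  | succ t ih =>
    rw [visit_succ]
    exact (isPMF_stateActionVisit_of_isPMF_visit hπ (ih a s)).sum_mul fun x => hp x.1 x.2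

lemma isPMF_stateActionVisit (hp : IsKernel p) (hπ : IsPolicy π) (t : ℕ) (a : A) (s : S) :
    IsPMF (stateActionVisit p π t a s) :=
  isPMF_stateActionVisit_of_isPMF_visit hπ (isPMF_visit hp hπ t a s)

lemma DTV_stateActionVisit_le (hπ : IsPolicy π) (t : ℕ) (a : A) (s : S) :
    DTV (stateActionVisit p π t a s) (stateActionVisit phat π t a s) ≤
      DTV (visit p π t a s) (visit phat π t a s) := by
  cases t with
  | zero => simpa [DTV, stateActionVisit] using DTV_nonneg _ _
  | succ t =>
    refine le_of_eq ?_
    simp only [DTV, stateActionVisit, Fintype.sum_prod_type_right, ← mul_sub, abs_mul,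
      abs_of_nonneg ((hπ _).1 _), ← Finset.sum_mul, (hπ _).2, one_mul]

lemma DTV_visit_succ_le (hp : IsKernel p) (hphat : IsKernel phat) (hπ : IsPolicy π)
    (t : ℕ) (a : A) (s : S) :
    DTV (visit p π (t + 1) a s) (visit phat π (t + 1) a s) ≤
      DTV (visit p π t a s) (visit phat π t a s) +
        ∑ x, stateActionVisit p π t a s x * DTV (p x.1 x.2) (phat x.1 x.2) := by
  rw [visit_succ, visit_succ]
  exact (DTV_comp_le (isPMF_stateActionVisit hp hπ t a s).1 fun x => hphat x.1 x.2).trans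
    (add_le_add_left (DTV_stateActionVisit_le hπ t a s) _)

lemma DTV_dvisit_le (hp : IsKernel p) (hphat : IsKernel phat) (hπ : IsPolicy π)
    (hγ0 : 0 ≤ γ) (hγ1 : γ < 1) (a : A) (s : S) :
    DTV (fun y => dvisit p γ π y a s) (fun y => dvisit phat γ π y a s) ≤
      (1 - γ) * ∑' t, γ ^ t * DTV (visit p π t a s) (visit phat π t a s) := by
  have hmix : ∀ q : A → S → S → ℝ, (fun y => dvisit q γ π y a s) =
      fun y => ∑' t, (1 - γ) * γ ^ t * visit q π t a s y := fun q => by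
    simp only [dvisit, ← tsum_mul_left, mul_assoc]
  have hsum : ∀ q : A → S → S → ℝ, IsKernel q → ∀ y,
      Summable fun t => (1 - γ) * γ ^ t * visit q π t a s y := fun q hq y => by
    simpa only [mul_assoc] using (summable_pow_mul_of_nonneg_of_le_one hγ0 hγ1
      (fun t => (isPMF_visit hq hπ t a s).1 y)
      (fun t => (isPMF_visit hq hπ t a s).le_one y)).mul_left (1 - γ)
  rw [hmix, hmix, ← tsum_mul_left]
  refine (DTV_tsum_le (hsum p hp) (hsum phat hphat)).trans_eq (tsum_congr fun t => ?_)
  rw [DTV_const_mul (mul_nonneg (sub_nonneg.2 hγ1.le) (pow_nonneg hγ0 t)), mul_assoc]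

lemma summable_stateActionVisit (hp : IsKernel p) (hπ : IsPolicy π) (hγ0 : 0 ≤ γ)
    (hγ1 : γ < 1) (a : A) (s : S) (x : A × S) :
    Summable fun t => γ ^ t * stateActionVisit p π t a s x :=
  summable_pow_mul_of_nonneg_of_le_one hγ0 hγ1
    (fun t => (isPMF_stateActionVisit hp hπ t a s).1 x)
    (fun t => (isPMF_stateActionVisit hp hπ t a s).le_one x)

lemma qvisit_eq_tsum (hp : IsKernel p) (hπ : IsPolicy π) (hγ0 : 0 ≤ γ) (hγ1 : γ < 1)
    (a' : A) (s' : S) (a : A) (s : S) :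
    qvisit p γ π a' s' a s = (1 - γ) * ∑' t, γ ^ t * stateActionVisit p π t a s (a', s') := by
  rw [(summable_stateActionVisit hp hπ hγ0 hγ1 a s (a', s')).tsum_eq_zero_add]
  simp [qvisit, stateActionVisit]

lemma sum_qvisit_mul (hp : IsKernel p) (hπ : IsPolicy π) (hγ0 : 0 ≤ γ) (hγ1 : γ < 1)
    (a : A) (s : S) (c : A → S → ℝ) :
    ∑ a', ∑ s', qvisit p γ π a' s' a s * c a' s' =
      (1 - γ) * ∑' t, γ ^ t * ∑ x, stateActionVisit p π t a s x * c x.1 x.2 := by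
  simp only [qvisit_eq_tsum hp hπ hγ0 hγ1, ← Fintype.sum_prod_type', Finset.mul_sum,
    ← tsum_mul_left, ← tsum_mul_right]
  rw [← Summable.tsum_finsetSum fun x _ =>
    ((summable_stateActionVisit hp hπ hγ0 hγ1 a s x).mul_left _).mul_right _]
  exact tsum_congr fun t => Finset.sum_congr rfl fun x _ => by ring

end Visitation

theorem visitation_model_error_bound_general {S A : Type} [Fintype S] [Fintype A] [DecidableEq S] [DecidableEq A]
    (p phat : A → S → S → ℝ) (γ : ℝ)
    (hp : IsKernel p) (hphat : IsKernel phat) (hγ0 : 0 ≤ γ) (hγ1 : γ < 1)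
    (π : S → A → ℝ) (hπ : IsPolicy π) :
    ∀ (a : A) (s : S),
      DTV (fun sstar => dvisit p γ π sstar a s) (fun sstar => dvisit phat γ π sstar a s) ≤
        γ / (1 - γ) *
          ∑ a' : A, ∑ s' : S, qvisit p γ π a' s' a s * DTV (p a' s') (phat a' s') := by
  intro a s
  set D : ℕ → ℝ := fun t => DTV (visit p π t a s) (visit phat π t a s)
  set F : ℕ → ℝ := fun t => ∑ x, stateActionVisit p π t a s x * DTV (p x.1 x.2) (phat x.1 x.2)
  have hD : Summable fun t => γ ^ t * D t :=
    summable_pow_mul_of_nonneg_of_le_one hγ0 hγ1 (fun t => DTV_nonneg _ _)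
      (fun t => DTV_le_one (isPMF_visit hp hπ t a s) (isPMF_visit hphat hπ t a s))
  have hF : Summable fun t => γ ^ t * F t := by
    simp only [F, Finset.mul_sum, ← mul_assoc]
    exact summable_sum fun x _ => (summable_stateActionVisit hp hπ hγ0 hγ1 a s x).mul_right _
  have hD0 : D 0 = 0 := by simp [D, DTV, visit]
  calc DTV (fun y => dvisit p γ π y a s) (fun y => dvisit phat γ π y a s)
      ≤ (1 - γ) * ∑' t, γ ^ t * D t := DTV_dvisit_le hp hphat hπ hγ0 hγ1 a s
    _ ≤ D 0 + γ * ∑' t, γ ^ t * F t :=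
        one_sub_mul_tsum_le hγ0 hD hF fun t => DTV_visit_succ_le hp hphat hπ t a s
    _ = γ / (1 - γ) * ∑ a', ∑ s', qvisit p γ π a' s' a s * DTV (p a' s') (phat a' s') := by
        rw [hD0, sum_qvisit_mul hp hπ hγ0 hγ1, zero_add]
        field_simp [(sub_pos.2 hγ1).ne']
        rfl

theorem visitation_model_error_bound {S A : Type} [Fintype S] [Fintype A] [DecidableEq S] [DecidableEq A]
    [Nonempty S] [Nonempty A]
    (p phat : A → S → S → ℝ) (γ : ℝ)
    (hp : IsKernel p) (hphat : IsKernel phat) (hγ0 : 0 ≤ γ) (hγ1 : γ < 1)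
    (π : S → A → ℝ) (hπ : IsPolicy π) :
    ∀ (a : A) (s : S),
      DTV (fun sstar => dvisit p γ π sstar a s) (fun sstar => dvisit phat γ π sstar a s) ≤
        γ / (1 - γ) *
          ∑ a' : A, ∑ s' : S, qvisit p γ π a' s' a s * DTV (p a' s') (phat a' s') :=
  visitation_model_error_bound_general p phat γ hp hphat hγ0 hγ1 π hπ

end VEPO
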